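/- (Bound on the marginal-likelihood functional at and above the true smoothness, used in Lemma 1.) For every σ, β, M > 0 there exist C > 0 and K > 0 such that for all integers m ≥ K and all reals n with n/m ≥ K the following holds: set k = n/(σ²·m) and let θ₀ ∈ ℓ² be defined by θ₀,ᵢ² = M²·i^{-1-2β} for all integers i ≥ (n/(σ²·√m))^{1/(1+2β)} and θ₀,ᵢ = 0 otherwise. Then for every α with β ≤ α ≤ β + 1/2, h_k(α) := ((1+2α)/(k^{1/(1+2α)}·log k))·Σ_{i=1}^∞ k²·i^{1+2α}·θ₀,ᵢ²·(log i)/(k + i^{1+2α})² ≤ C·m^{-2α/(1+2α)}·log m. -/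

import Mathlib

/-- The squared coefficients of the 'difficult' signal: `θ₀,ᵢ² = M² i^{-1-2β}` for
integers `i ≥ (n/(σ²√m))^{1/(1+2β)}` and `θ₀,ᵢ = 0` otherwise (coordinate `i : ℕ`
corresponds to the integer `i + 1`). -/
noncomputable def counterSignalSq (σ β M n : ℝ) (m : ℕ) (i : ℕ) : ℝ :=
  if (n / (σ ^ 2 * Real.sqrt (m : ℝ))) ^ (1 / (1 + 2 * β)) ≤ (i : ℝ) + 1 then
    M ^ 2 * ((i : ℝ) + 1) ^ (-1 - 2 * β)
  else 0

/-- The marginal-likelihood functional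
`h_k(α) = ((1+2α)/(k^{1/(1+2α)} log k)) Σᵢ k² i^{1+2α} θ₀,ᵢ² (log i)/(k + i^{1+2α})²`. -/
noncomputable def hFun (σ β M n : ℝ) (m : ℕ) (α : ℝ) : ℝ :=
  let k := n / (σ ^ 2 * (m : ℝ))
  ((1 + 2 * α) / (k ^ (1 / (1 + 2 * α)) * Real.log k)) *
    ∑' i : ℕ, k ^ 2 * ((i : ℝ) + 1) ^ (1 + 2 * α) * counterSignalSq σ β M n m i
      * Real.log ((i : ℝ) + 1) / (k + ((i : ℝ) + 1) ^ (1 + 2 * α)) ^ 2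

/-! Only the coordinates `i + 1 ≥ T := (k √m)^{1/(1+2β)}` contribute. There
`k² x^a / (k + x^a)² ≤ k² / x^a` with `a = 1 + 2α`, and since `log x / x^a` decreases beyond
`exp (1/a)`, each term is at most `M² k² (log T / T^a) x^{-1-2β}`. The tail
`∑_{x ≥ T} x^{-1-2β}` telescopes against `min (x^{-2β}) (T^{-2β})` and is `O(T^{-2β})`.
Since `log T = (log k + log m / 2)/(1+2β)`, the resulting bound is `k` to the power
`-4α(α-β)/((1+2α)(1+2β)) ≤ 0`, times a power of `m` at most `m^{-2α/(1+2α)}`, times a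
logarithmic factor at most `2 log m`. -/

open Real Finset

lemma one_sub_rpow_le_one_sub_min_mul {c t : ℝ} (hc : 0 < c) (ht₀ : 0 ≤ t) (ht₁ : t ≤ 1) :
    (1 - t) ^ c ≤ 1 - min c 1 * t := by
  rcases le_total c 1 with h | h
  · rw [min_eq_left h]
    simpa [sub_eq_add_neg] using rpow_one_add_le_one_add_mul_self (s := -t) (by linarith) hc.le h
  · rw [min_eq_right h, one_mul]
    simpa using rpow_le_rpow_of_exponent_ge' (sub_nonneg.2 ht₁) (by linarith) zero_le_one h

lemma min_div_two_mul_rpow_le_rpow_sub_rpow {c x : ℝ} (hc : 0 < c) (hx : 1 ≤ x) :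
    min c 1 / 2 * x ^ (-1 - c) ≤ x ^ (-c) - (x + 1) ^ (-c) := by
  have hx₀ : 0 < x := by linarith
  have hratio : (x / (x + 1)) ^ c ≤ 1 - min c 1 * (1 / (x + 1)) := by
    have h := one_sub_rpow_le_one_sub_min_mul hc (t := 1 / (x + 1)) (by positivity)
      (by rw [div_le_one (by positivity)]; linarith)
    rwa [show 1 - 1 / (x + 1) = x / (x + 1) by field_simp; ring] at h
  rw [div_rpow hx₀.le (by positivity)] at hratio
  calc min c 1 / 2 * x ^ (-1 - c) = x ^ (-c) * (min c 1 * (1 / (2 * x))) := by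
        rw [sub_eq_add_neg, rpow_add hx₀, rpow_neg_one]; ring
    _ ≤ x ^ (-c) * (min c 1 * (1 / (x + 1))) := by
        gcongr
        linarith
    _ ≤ x ^ (-c) * (1 - x ^ c / (x + 1) ^ c) := by gcongr; linarith
    _ = x ^ (-c) - (x + 1) ^ (-c) := by
        rw [rpow_neg hx₀.le, rpow_neg (by positivity)]
        field_simp [(rpow_pos_of_pos hx₀ c).ne']

lemma sum_range_ite_rpow_le {c x₀ : ℝ} (hc : 0 < c) (hx₀ : 1 ≤ x₀) (N : ℕ) :
    ∑ i ∈ range N, (if x₀ ≤ (i : ℝ) + 1 then ((i : ℝ) + 1) ^ (-1 - c) else 0)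
      ≤ 2 / min c 1 * x₀ ^ (-c) := by
  -- capped at `x₀ ^ (-c)`, `g` is constant below `x₀`; the telescoped sum is at most `x₀ ^ (-c)`
  set g : ℕ → ℝ := fun i ↦ min (((i : ℝ) + 1) ^ (-c)) (x₀ ^ (-c))
  have hg_anti : ∀ i, g (i + 1) ≤ g i := fun i ↦ by
    refine min_le_min (rpow_le_rpow_of_nonpos (by positivity) ?_ (by linarith)) le_rfl
    push_cast; linarith
  have hterm : ∀ i : ℕ, (if x₀ ≤ (i : ℝ) + 1 then ((i : ℝ) + 1) ^ (-1 - c) else 0)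
      ≤ 2 / min c 1 * (g i - g (i + 1)) := fun i ↦ by
    split_ifs with h
    · have hgi : g i = ((i : ℝ) + 1) ^ (-c) :=
        min_eq_left (rpow_le_rpow_of_nonpos (by linarith) h (by linarith))
      have hgi' : g (i + 1) = ((i : ℝ) + 1 + 1) ^ (-c) := by
        simp only [g]; push_cast
        exact min_eq_left (rpow_le_rpow_of_nonpos (by linarith) (by linarith) (by linarith))
      rw [hgi, hgi']
      calc ((i : ℝ) + 1) ^ (-1 - c)
          = 2 / min c 1 * (min c 1 / 2 * ((i : ℝ) + 1) ^ (-1 - c)) := by field_simp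
        _ ≤ _ := by
            gcongr
            exact min_div_two_mul_rpow_le_rpow_sub_rpow hc (by linarith)
    · exact mul_nonneg (by positivity) (sub_nonneg.2 (hg_anti i))
  calc _ ≤ ∑ i ∈ range N, 2 / min c 1 * (g i - g (i + 1)) := sum_le_sum fun i _ ↦ hterm i
    _ = 2 / min c 1 * (g 0 - g N) := by rw [← mul_sum, sum_range_sub']
    _ ≤ 2 / min c 1 * x₀ ^ (-c) := by
        gcongr
        have : 0 ≤ g N := le_min (by positivity) (by positivity)
        linarith [show g 0 ≤ x₀ ^ (-c) from min_le_right _ _]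

lemma sq_mul_rpow_mul_log_div_le {a k y T x : ℝ} (ha : 0 < a) (hk : 0 ≤ k) (hy : 0 ≤ y)
    (hT : exp a⁻¹ ≤ T) (hx : T ≤ x) :
    k ^ 2 * x ^ a * y * log x / (k + x ^ a) ^ 2 ≤ k ^ 2 * y * (log T / T ^ a) := by
  have hx₁ : 1 ≤ x := (one_le_exp (by positivity)).trans (hT.trans hx)
  have hlog : 0 ≤ log x := log_nonneg hx₁
  calc k ^ 2 * x ^ a * y * log x / (k + x ^ a) ^ 2
      = k ^ 2 * y * (x ^ a * log x / (k + x ^ a) ^ 2) := by ring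
    _ ≤ k ^ 2 * y * (x ^ a * log x / (x ^ a) ^ 2) := by gcongr; linarith
    _ = k ^ 2 * y * (log x / x ^ a) := by field_simp
    _ ≤ k ^ 2 * y * (log T / T ^ a) :=
        mul_le_mul_of_nonneg_left (log_div_self_rpow_antitoneOn ha hT (hT.trans hx) hx)
          (by positivity)

lemma tsum_ite_rpow_mul_log_div_le {a c k M T : ℝ} (ha : 0 < a) (hc : 0 < c) (hk : 0 ≤ k)
    (hT : exp a⁻¹ ≤ T) :
    ∑' i : ℕ, k ^ 2 * ((i : ℝ) + 1) ^ a
        * (if T ≤ (i : ℝ) + 1 then M ^ 2 * ((i : ℝ) + 1) ^ (-1 - c) else 0)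
        * log ((i : ℝ) + 1) / (k + ((i : ℝ) + 1) ^ a) ^ 2
      ≤ 2 / min c 1 * M ^ 2 * (k ^ 2 * log T * T ^ (-(a + c))) := by
  have hT₁ : 1 ≤ T := (one_le_exp (by positivity)).trans hT
  have hT₀ : 0 < T := by linarith
  have hlogT : 0 ≤ log T := log_nonneg hT₁
  refine Real.tsum_le_of_sum_range_le (fun i ↦ ?_) (fun N ↦ ?_)
  · have : 0 ≤ log ((i : ℝ) + 1) := log_nonneg (by linarith [i.cast_nonneg (α := ℝ)])
    split_ifs <;> positivity
  calc _ ≤ ∑ i ∈ range N, k ^ 2 * M ^ 2 * (log T / T ^ a)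
          * (if T ≤ (i : ℝ) + 1 then ((i : ℝ) + 1) ^ (-1 - c) else 0) := by
        refine sum_le_sum fun i _ ↦ ?_
        split_ifs with h
        · refine (sq_mul_rpow_mul_log_div_le ha hk ?_ hT h).trans_eq (by ring)
          exact mul_nonneg (sq_nonneg M) (rpow_nonneg (by linarith) _)
        · simp
    _ ≤ k ^ 2 * M ^ 2 * (log T / T ^ a) * (2 / min c 1 * T ^ (-c)) := by
        rw [← mul_sum]
        gcongr
        exact sum_range_ite_rpow_le hc hT₁ N
    _ = 2 / min c 1 * M ^ 2 * (k ^ 2 * log T * T ^ (-(a + c))) := by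
        rw [neg_add, rpow_add hT₀, rpow_neg hT₀.le a]
        ring

lemma rpow_sq_mul_rpow_div_rpow_le {α β k m : ℝ} (hβ : 0 ≤ β) (hβα : β ≤ α) (hk : 1 ≤ k)
    (hm : 1 ≤ m) :
    k ^ 2 * ((k * √m) ^ (1 / (1 + 2 * β))) ^ (-(1 + 2 * α + 2 * β)) / k ^ (1 / (1 + 2 * α))
      ≤ m ^ (-(2 * α / (1 + 2 * α))) := by
  have hk₀ : 0 < k := by linarith
  have hm₀ : 0 < m := by linarith
  have ha : 0 < 1 + 2 * α := by linarith
  have hb : 0 < 1 + 2 * β := by linarith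
  have hkexp : 2 - (1 + 2 * α + 2 * β) / (1 + 2 * β) - 1 / (1 + 2 * α) ≤ 0 := by
    rw [show 2 - (1 + 2 * α + 2 * β) / (1 + 2 * β) - 1 / (1 + 2 * α)
        = -(4 * α * (α - β)) / ((1 + 2 * α) * (1 + 2 * β)) by field_simp; ring]
    exact div_nonpos_of_nonpos_of_nonneg (by nlinarith) (mul_pos ha hb).le
  have hmexp : 2 * α / (1 + 2 * α) ≤ (1 + 2 * α + 2 * β) / (1 + 2 * β) / 2 := by
    rw [div_div, div_le_div_iff₀ ha (by linarith)]
    nlinarith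
  rw [← rpow_mul (by positivity), mul_rpow hk₀.le (sqrt_nonneg _), sqrt_eq_rpow,
    ← rpow_mul hm₀.le, ← rpow_two]
  simp only [rpow_def_of_pos hk₀, rpow_def_of_pos hm₀, ← exp_add, ← exp_sub, exp_le_exp]
  linear_combination mul_nonpos_of_nonneg_of_nonpos (log_nonneg hk) hkexp
    + mul_le_mul_of_nonneg_left hmexp (log_nonneg hm)

lemma mul_log_div_log_le {α β k m : ℝ} (hβ : 0 ≤ β) (hαβ : α ≤ β + 1 / 2) (hk : exp 1 ≤ k)
    (hm : exp 2 ≤ m) :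
    (1 + 2 * α) * log ((k * √m) ^ (1 / (1 + 2 * β))) / log k ≤ 2 * log m := by
  have hk₀ : 0 < k := (exp_pos 1).trans_le hk
  have hm₀ : 0 < m := (exp_pos 2).trans_le hm
  have hL : 1 ≤ log k := (le_log_iff_exp_le hk₀).2 hk
  have hℓ : 2 ≤ log m := (le_log_iff_exp_le hm₀).2 hm
  rw [log_rpow (by positivity), log_mul hk₀.ne' (by positivity), log_sqrt hm₀.le,
    div_le_iff₀ (by linarith), one_div_mul_eq_div, mul_div_assoc', div_le_iff₀ (by linarith)]
  nlinarith [mul_nonneg (sub_nonneg.2 hL) (sub_nonneg.2 hℓ)]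

lemma div_mul_log_mul_rpow_le {α β k m : ℝ} (hβ : 0 ≤ β) (hβα : β ≤ α) (hαβ : α ≤ β + 1 / 2)
    (hk : exp 1 ≤ k) (hm : exp 2 ≤ m) :
    (1 + 2 * α) / (k ^ (1 / (1 + 2 * α)) * log k) * (k ^ 2 * log ((k * √m) ^ (1 / (1 + 2 * β)))
        * ((k * √m) ^ (1 / (1 + 2 * β))) ^ (-(1 + 2 * α + 2 * β)))
      ≤ 2 * m ^ (-(2 * α / (1 + 2 * α))) * log m := by
  have hk₁ : 1 ≤ k := (one_le_exp zero_le_one).trans hk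
  have hm₁ : 1 ≤ m := (one_le_exp zero_le_two).trans hm
  calc _ = (1 + 2 * α) * log ((k * √m) ^ (1 / (1 + 2 * β))) / log k
        * (k ^ 2 * ((k * √m) ^ (1 / (1 + 2 * β))) ^ (-(1 + 2 * α + 2 * β))
          / k ^ (1 / (1 + 2 * α))) := by ring
    _ ≤ 2 * log m * m ^ (-(2 * α / (1 + 2 * α))) :=
        mul_le_mul (mul_log_div_log_le hβ hαβ hk hm)
          (rpow_sq_mul_rpow_div_rpow_le hβ hβα hk₁ hm₁) (by positivity)
          (by linarith [log_nonneg hm₁])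
    _ = 2 * m ^ (-(2 * α / (1 + 2 * α))) * log m := by ring

lemma exp_inv_le_rpow_one_div {α β k m : ℝ} (hβ : 0 ≤ β) (hβα : β ≤ α) (hk : exp 1 ≤ k)
    (hm : 1 ≤ m) :
    exp (1 + 2 * α)⁻¹ ≤ (k * √m) ^ (1 / (1 + 2 * β)) :=
  calc exp (1 + 2 * α)⁻¹ ≤ exp (1 * (1 / (1 + 2 * β))) := by
        rw [exp_le_exp, one_mul, one_div]
        exact inv_anti₀ (by linarith) (by linarith)
    _ = exp 1 ^ (1 / (1 + 2 * β)) := exp_mul 1 _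
    _ ≤ (k * √m) ^ (1 / (1 + 2 * β)) := by
        gcongr
        exact hk.trans (le_mul_of_one_le_right ((exp_pos 1).le.trans hk) (one_le_sqrt.2 hm))

/-- Bound on the marginal-likelihood functional at and above the true smoothness (used in
Lemma 1): for every `σ, β, M > 0` there exist `C > 0` and `K > 0` such that for all
integers `m ≥ K` and all reals `n` with `n/m ≥ K`, for every `β ≤ α ≤ β + 1/2` one has
`h_k(α) ≤ C m^{-2α/(1+2α)} log m`, where `k = n/(σ² m)` and `θ₀` is the difficult
signal. -/
theorem hFun_bound_above_true_smoothness
    (σ β M : ℝ) (hσ : 0 < σ) (hβ : 0 < β) (hM : 0 < M) :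
    ∃ C K : ℝ, 0 < C ∧ 0 < K ∧
      ∀ m : ℕ, K ≤ (m : ℝ) → ∀ n : ℝ, K ≤ n / (m : ℝ) →
        ∀ α : ℝ, β ≤ α → α ≤ β + 1 / 2 →
          hFun σ β M n m α ≤ C * (m : ℝ) ^ (-(2 * α / (1 + 2 * α))) * Real.log (m : ℝ) := by
  refine ⟨4 * M ^ 2 / min (2 * β) 1, max (σ ^ 2 * exp 1) (exp 2), by positivity, by positivity,
    ?_⟩
  intro m hm n hn α hβα hαβ
  have hm₂ : exp 2 ≤ (m : ℝ) := (le_max_right _ _).trans hm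
  have hm₁ : 1 ≤ (m : ℝ) := (one_le_exp zero_le_two).trans hm₂
  set k := n / (σ ^ 2 * (m : ℝ)) with hk_def
  have hk : exp 1 ≤ k := by
    rw [hk_def, mul_comm, ← div_div, le_div_iff₀ (by positivity), mul_comm]
    exact (le_max_left _ _).trans hn
  have hthreshold : n / (σ ^ 2 * √(m : ℝ)) = k * √(m : ℝ) := by
    rw [hk_def]
    field_simp
    rw [sq_sqrt (by positivity)]
  have hk₁ : 1 ≤ k := (one_le_exp zero_le_one).trans hk
  have hpref : 0 ≤ (1 + 2 * α) / (k ^ (1 / (1 + 2 * α)) * log k) :=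
    div_nonneg (by linarith) (mul_nonneg (rpow_nonneg (by linarith) _) (log_nonneg hk₁))
  calc hFun σ β M n m α
      ≤ (1 + 2 * α) / (k ^ (1 / (1 + 2 * α)) * log k) * (2 / min (2 * β) 1 * M ^ 2
          * (k ^ 2 * log ((k * √(m : ℝ)) ^ (1 / (1 + 2 * β)))
            * ((k * √(m : ℝ)) ^ (1 / (1 + 2 * β))) ^ (-(1 + 2 * α + 2 * β)))) := by
        unfold hFun counterSignalSq
        rw [hthreshold]
        exact mul_le_mul_of_nonneg_left (tsum_ite_rpow_mul_log_div_le (by linarith)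
          (by positivity) (by linarith) (exp_inv_le_rpow_one_div hβ.le hβα hk hm₁)) hpref
    _ ≤ 2 / min (2 * β) 1 * M ^ 2 * (2 * (m : ℝ) ^ (-(2 * α / (1 + 2 * α))) * log m) := by
        rw [mul_left_comm]
        exact mul_le_mul_of_nonneg_left (div_mul_log_mul_rpow_le hβ.le hβα hαβ hk hm₂)
          (by positivity)
    _ = 4 * M ^ 2 / min (2 * β) 1 * (m : ℝ) ^ (-(2 * α / (1 + 2 * α))) * log m := by ring
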